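/- arXiv:2206.14266 — 4 statements merged into one kernel-verified Lean document; each statement's English description precedes it below -/
import Mathlib

section
/- Let T ∈ B(H) and suppose λ, μ ∈ ℂ satisfy: for every ε > 0 and every finite-codimensional subspace M of H there exist unit vectors x, y ∈ M with x ⊥ y, |⟨Tx,x⟩ − λ| < ε and |⟨Ty,y⟩ − μ| < ε. Let 0 < C < |λ − μ|. Then for every finite-codimensional closed subspace M ⊆ H there exist vectors v, z ∈ M with ‖v‖·‖z‖ ≤ 2√2/C, v ⊥ z, and ⟨Tv, z⟩ = 1. -/
/-!
If `x ⊥ y` are unit vectors with `⟪x, T y⟫ = ⟪y, T x⟫ = 0`, then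
`⟪x - y, T (x + y)⟫ = ⟪x, T x⟫ - ⟪y, T y⟫ =: α`, so `v = α⁻¹ • (x + y)` and `z = x - y` satisfy
`⟪z, T v⟫ = 1`, `v ⊥ z` and `‖v‖ ‖z‖ = 2 / ‖α‖`. Choosing `x, y ∈ M` with diagonal values close
enough to `λ` and `μ` makes `‖α‖ > C`.
-/

open scoped InnerProductSpace

section InnerProductSpace

variable {𝕜 E : Type*} [RCLike 𝕜] [NormedAddCommGroup E] [InnerProductSpace 𝕜 E]

theorem norm_add_mul_norm_sub_of_inner_eq_zero {x y : E} (h : ⟪x, y⟫_𝕜 = 0) :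
    ‖x + y‖ * ‖x - y‖ = ‖x‖ ^ 2 + ‖y‖ ^ 2 := by
  have hadd := norm_add_sq_eq_norm_sq_add_norm_sq_of_inner_eq_zero x y h
  have hsub := norm_add_sq_eq_norm_sq_add_norm_sq_of_inner_eq_zero (𝕜 := 𝕜) x (-y)
    (by rw [inner_neg_right, h, neg_zero])
  rw [← sub_eq_add_neg, norm_neg] at hsub
  have heq : ‖x + y‖ = ‖x - y‖ :=
    (mul_self_inj (norm_nonneg _) (norm_nonneg _)).1 (hadd.trans hsub.symm)
  rw [heq, hsub]
  ring

theorem inner_add_sub_eq_zero_of_inner_eq_zero {x y : E} (hxy : ⟪x, y⟫_𝕜 = 0)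
    (hn : ‖x‖ = ‖y‖) : ⟪x + y, x - y⟫_𝕜 = 0 := by
  have hyx : ⟪y, x⟫_𝕜 = 0 := by rw [← inner_conj_symm, hxy, map_zero]
  simp only [inner_add_left, inner_sub_right, hxy, hyx, inner_self_eq_norm_sq_to_K, hn]
  ring

theorem inner_sub_map_add_of_inner_map_eq_zero (T : E →ₗ[𝕜] E) {x y : E}
    (hxTy : ⟪x, T y⟫_𝕜 = 0) (hyTx : ⟪y, T x⟫_𝕜 = 0) :
    ⟪x - y, T (x + y)⟫_𝕜 = ⟪x, T x⟫_𝕜 - ⟪y, T y⟫_𝕜 := by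
  simp only [map_add, inner_sub_left, inner_add_right, hxTy, hyTx]
  ring

theorem exists_inner_map_eq_one_of_diagonal_ne (T : E →ₗ[𝕜] E) (M : Submodule 𝕜 E)
    {x y : E} (hxM : x ∈ M) (hyM : y ∈ M) (hx : ‖x‖ = 1) (hy : ‖y‖ = 1) (hxy : ⟪x, y⟫_𝕜 = 0)
    (hxTy : ⟪x, T y⟫_𝕜 = 0) (hyTx : ⟪y, T x⟫_𝕜 = 0) (hne : ⟪x, T x⟫_𝕜 ≠ ⟪y, T y⟫_𝕜) :
    ∃ v z : E, v ∈ M ∧ z ∈ M ∧ ‖v‖ * ‖z‖ = 2 / ‖⟪x, T x⟫_𝕜 - ⟪y, T y⟫_𝕜‖ ∧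
      ⟪v, z⟫_𝕜 = 0 ∧ ⟪z, T v⟫_𝕜 = 1 := by
  set α := ⟪x, T x⟫_𝕜 - ⟪y, T y⟫_𝕜
  have hα : α ≠ 0 := sub_ne_zero.2 hne
  refine ⟨α⁻¹ • (x + y), x - y, M.smul_mem _ (M.add_mem hxM hyM), M.sub_mem hxM hyM, ?_, ?_, ?_⟩
  · rw [norm_smul, mul_assoc, norm_add_mul_norm_sub_of_inner_eq_zero hxy, hx, hy, norm_inv]
    ring
  · rw [inner_smul_left, inner_add_sub_eq_zero_of_inner_eq_zero hxy (hx.trans hy.symm), mul_zero]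
  · rw [map_smul, inner_smul_right, inner_sub_map_add_of_inner_map_eq_zero T hxTy hyTx,
      inv_mul_cancel₀ hα]

end InnerProductSpace

theorem norm_sub_le_norm_sub_add_norm_sub_add_norm_sub {E : Type*} [SeminormedAddCommGroup E]
    (a b c d : E) : ‖c - d‖ ≤ ‖a - b‖ + ‖a - c‖ + ‖b - d‖ := by
  calc ‖c - d‖ = ‖(a - b) - (a - c) + (b - d)‖ := by congr 1; abel
    _ ≤ ‖a - b‖ + ‖a - c‖ + ‖b - d‖ := (norm_add_le _ _).trans (by gcongr; exact norm_sub_le _ _)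

/-- Lemma 4.1: if λ, μ are approximately attained diagonal values of T on every
finite-codimensional subspace (by suitably orthogonal unit vectors), and 0 < C < |λ − μ|,
then every closed finite-codimensional subspace M contains v, z with ‖v‖‖z‖ ≤ 2√2/C,
v ⊥ z and ⟨Tv, z⟩ = 1. -/
theorem stmt4 {H : Type*} [NormedAddCommGroup H] [InnerProductSpace ℂ H] [CompleteSpace H]
    (T : H →L[ℂ] H) (lam mu : ℂ) (C : ℝ)
    (hC0 : 0 < C) (hC : C < ‖lam - mu‖)
    (h : ∀ ε > (0 : ℝ), ∀ M : Submodule ℂ H, IsClosed (M : Set H) →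
      FiniteDimensional ℂ (H ⧸ M) →
      ∃ x y : H, x ∈ M ∧ y ∈ M ∧ T x ∈ M ∧ T y ∈ M ∧ ‖x‖ = 1 ∧ ‖y‖ = 1 ∧
        (inner ℂ x y : ℂ) = 0 ∧ (inner ℂ (T x) y : ℂ) = 0 ∧
        (inner ℂ ((ContinuousLinearMap.adjoint T) x) y : ℂ) = 0 ∧
        ‖(inner ℂ x (T x) : ℂ) - lam‖ < ε ∧
        ‖(inner ℂ y (T y) : ℂ) - mu‖ < ε)
    (M : Submodule ℂ H) (hMc : IsClosed (M : Set H)) (hMf : FiniteDimensional ℂ (H ⧸ M)) :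
    ∃ v z : H, v ∈ M ∧ z ∈ M ∧ ‖v‖ * ‖z‖ ≤ 2 * Real.sqrt 2 / C ∧
      (inner ℂ v z : ℂ) = 0 ∧ (inner ℂ z (T v) : ℂ) = 1 := by
  obtain ⟨x, y, hxM, hyM, -, -, hx, hy, hxy, hTxy, hTadjxy, hxlam, hymu⟩ :=
    h ((‖lam - mu‖ - C) / 2) (by linarith) M hMc hMf
  have hgap : C < ‖⟪x, T x⟫_ℂ - ⟪y, T y⟫_ℂ‖ := by
    have := norm_sub_le_norm_sub_add_norm_sub_add_norm_sub (⟪x, T x⟫_ℂ) (⟪y, T y⟫_ℂ) lam mu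
    linarith
  have hyTx : ⟪y, T x⟫_ℂ = 0 := by rw [← inner_conj_symm, hTxy, map_zero]
  have hxTy : ⟪x, T y⟫_ℂ = 0 := by rw [← ContinuousLinearMap.adjoint_inner_left, hTadjxy]
  obtain ⟨v, z, hvM, hzM, hvz, hinner, hone⟩ := exists_inner_map_eq_one_of_diagonal_ne
    (T : H →ₗ[ℂ] H) M hxM hyM hx hy hxy hxTy hyTx (sub_ne_zero.1 (norm_pos_iff.1 (hC0.trans hgap)))
  refine ⟨v, z, hvM, hzM, ?_, hinner, hone⟩
  calc ‖v‖ * ‖z‖ = 2 / ‖⟪x, T x⟫_ℂ - ⟪y, T y⟫_ℂ‖ := hvz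
    _ ≤ 2 / C := by gcongr
    _ ≤ 2 * Real.sqrt 2 / C := by
      gcongr
      exact le_mul_of_one_le_right zero_le_two Real.one_lt_sqrt_two.le
end

section
/- Let T ∈ B(H) be an invertible operator, λ ∈ ℂ nonzero, k ∈ ℕ, and suppose (x_n) is a sequence of vectors in H converging weakly to 0 with inf_n ‖x_n‖ > 0 and ‖(T − λ)x_n‖ → 0. Prove that the sequence y_n = λ^k T^k x_n satisfies: inf_n ‖y_n‖ > 0, y_n → 0 weakly, ‖(T^j − λ^j) y_n‖ → 0 for all j = 1,…,k, and ‖(T^{−j} − λ^{−j}) y_n‖ → 0 for all j = 1,…,k. -/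
/-!
Write `y n = B (x n)` with `B = λ ^ k • T ^ k`. Approximate eigenvector sequences of `T` for `λ`
are approximate eigenvector sequences of `T ^ j` for `λ ^ j` and, as `λ ≠ 0`, of `T⁻¹` for `λ⁻¹`
(hence of `T ^ (-j)` for `λ ^ (-j)`); an operator commuting with these powers, such as `B`, maps
them to approximate eigenvector sequences again. Finally, a bounded operator preserves weak
convergence to `0` (through its adjoint), and one with a bounded left inverse preserves norms
bounded away from `0`.
-/

open Filter Topology

section ApproxEigen

variable {R E ι : Type*} [Ring R] [AddCommGroup E] [Module R E] [TopologicalSpace E]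

def IsApproxEigenseq (A : E →L[R] E) (μ : R) (l : Filter ι) (x : ι → E) : Prop :=
  Tendsto (fun n => A (x n) - μ • x n) l (𝓝 0)

variable {A B : E →L[R] E} {μ : R} {l : Filter ι} {x : ι → E}

theorem IsApproxEigenseq.pow [IsTopologicalAddGroup E] [ContinuousConstSMul R E]
    (h : IsApproxEigenseq A μ l x) (m : ℕ) :
    IsApproxEigenseq (A ^ m) (μ ^ m) l x := by
  induction m with
  | zero => simpa [IsApproxEigenseq] using tendsto_const_nhds
  | succ m ih =>
    have key : ∀ v : E, (A ^ (m + 1)) v - μ ^ (m + 1) • v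
        = A ((A ^ m) v - μ ^ m • v) + μ ^ m • (A v - μ • v) := fun v => by
      rw [pow_succ' A, mul_apply_eq_comp, pow_succ μ, mul_smul]
      simp only [map_sub, map_smul, smul_sub]
      abel
    unfold IsApproxEigenseq
    simp_rw [key]
    simpa using (A.continuous.tendsto' 0 0 (map_zero A) |>.comp ih).add (h.const_smul (μ ^ m))

theorem IsApproxEigenseq.map_of_commute (h : IsApproxEigenseq A μ l x) (hAB : Commute A B) :
    IsApproxEigenseq A μ l (fun n => B (x n)) := by
  have key : ∀ v : E, A (B v) - μ • B v = B (A v - μ • v) := fun v => by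
    rw [map_sub, map_smul, ← mul_apply_eq_comp, hAB.eq, mul_apply_eq_comp]
  unfold IsApproxEigenseq
  simp_rw [key]
  exact B.continuous.tendsto' 0 0 (map_zero B) |>.comp h

end ApproxEigen

theorem IsApproxEigenseq.symm {𝕜 E ι : Type*} [DivisionRing 𝕜] [AddCommGroup E] [Module 𝕜 E]
    [TopologicalSpace E] [IsTopologicalAddGroup E] [ContinuousConstSMul 𝕜 E]
    {T : E ≃L[𝕜] E} {μ : 𝕜} {l : Filter ι} {x : ι → E}
    (h : IsApproxEigenseq (T : E →L[𝕜] E) μ l x) (hμ : μ ≠ 0) :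
    IsApproxEigenseq (T.symm : E →L[𝕜] E) μ⁻¹ l x := by
  have key : ∀ v : E, T.symm v - μ⁻¹ • v = -(μ⁻¹ • T.symm (T v - μ • v)) := fun v => by
    rw [map_sub, map_smul, T.symm_apply_apply, smul_sub, smul_smul, inv_mul_cancel₀ hμ, one_smul,
      neg_sub]
  have hT : Tendsto (fun n => T (x n) - μ • x n) l (𝓝 0) := h
  show Tendsto (fun n => T.symm (x n) - μ⁻¹ • x n) l (𝓝 0)
  simp_rw [key]
  simpa using ((T.symm.continuous.tendsto' 0 0 (map_zero _)).comp hT |>.const_smul μ⁻¹).neg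

theorem exists_pos_le_norm_apply_of_leftInverse {𝕜 E ι : Type*} [NontriviallyNormedField 𝕜]
    [SeminormedAddCommGroup E] [NormedSpace 𝕜 E] {B B' : E →L[𝕜] E}
    (hB : Function.LeftInverse B' B) {x : ι → E} (hx : ∃ c > (0 : ℝ), ∀ n, c ≤ ‖x n‖) :
    ∃ c > (0 : ℝ), ∀ n, c ≤ ‖B (x n)‖ := by
  obtain ⟨c, hc, hcx⟩ := hx
  obtain ⟨K, hK, hB'⟩ := B'.bound
  refine ⟨c / K, div_pos hc hK, fun n => (div_le_iff₀' hK).2 ?_⟩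
  calc c ≤ ‖x n‖ := hcx n
    _ = ‖B' (B (x n))‖ := by rw [hB]
    _ ≤ K * ‖B (x n)‖ := hB' _

theorem tendsto_inner_apply_of_tendsto_inner {E ι : Type*} [NormedAddCommGroup E]
    [InnerProductSpace ℂ E] [CompleteSpace E] (B : E →L[ℂ] E) {l : Filter ι} {x : ι → E}
    (hx : ∀ w : E, Tendsto (fun n => inner ℂ w (x n)) l (𝓝 0)) (w : E) :
    Tendsto (fun n => inner ℂ w (B (x n))) l (𝓝 0) := by
  simpa only [ContinuousLinearMap.adjoint_inner_left] using hx (ContinuousLinearMap.adjoint B w)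

theorem stmt8_general {H : Type*} [NormedAddCommGroup H] [InnerProductSpace ℂ H] [CompleteSpace H]
    (T : H ≃L[ℂ] H) (lam : ℂ) (hlam : lam ≠ 0) (k : ℕ)
    (x : ℕ → H)
    (hweak : ∀ w : H, Filter.Tendsto (fun n => (inner ℂ w (x n) : ℂ)) Filter.atTop (nhds 0))
    (hinf : ∃ c > (0 : ℝ), ∀ n, c ≤ ‖x n‖)
    (hconv : Filter.Tendsto (fun n => ‖(T : H →L[ℂ] H) (x n) - lam • x n‖)
      Filter.atTop (nhds 0))
    (y : ℕ → H) (hy : y = fun n => lam ^ k • (((T : H →L[ℂ] H) ^ k) (x n))) :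
    (∃ c > (0 : ℝ), ∀ n, c ≤ ‖y n‖) ∧
    (∀ w : H, Filter.Tendsto (fun n => (inner ℂ w (y n) : ℂ)) Filter.atTop (nhds 0)) ∧
    (∀ j : ℕ, 1 ≤ j → j ≤ k →
      Filter.Tendsto (fun n => ‖((T : H →L[ℂ] H) ^ j) (y n) - lam ^ j • y n‖)
        Filter.atTop (nhds 0)) ∧
    (∀ j : ℕ, 1 ≤ j → j ≤ k →
      Filter.Tendsto (fun n => ‖((T.symm : H →L[ℂ] H) ^ j) (y n) - (lam⁻¹) ^ j • y n‖)
        Filter.atTop (nhds 0)) := by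
  set A : H →L[ℂ] H := (T : H →L[ℂ] H)
  set S : H →L[ℂ] H := (T.symm : H →L[ℂ] H)
  have hSA : S * A = 1 := T.coe_symm_comp_coe
  have hAS : Commute A S := T.coe_comp_coe_symm.trans hSA.symm
  set B : H →L[ℂ] H := lam ^ k • A ^ k
  obtain rfl : y = fun n => B (x n) := hy
  have hB : Function.LeftInverse (lam⁻¹ ^ k • S ^ k) B := fun v => by
    rw [← mul_apply_eq_comp, smul_mul_smul_comm, ← hAS.symm.mul_pow, hSA, one_pow, ← mul_pow,
      inv_mul_cancel₀ hlam, one_pow, one_smul, one_apply_eq_self]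
  have hA : IsApproxEigenseq A lam atTop x := tendsto_zero_iff_norm_tendsto_zero.2 hconv
  refine ⟨exists_pos_le_norm_apply_of_leftInverse hB hinf,
    tendsto_inner_apply_of_tendsto_inner B hweak, fun j _ _ => ?_, fun j _ _ => ?_⟩
  · exact tendsto_zero_iff_norm_tendsto_zero.1 <|
      (hA.pow j).map_of_commute ((Commute.pow_pow_self A j k).smul_right _)
  · exact tendsto_zero_iff_norm_tendsto_zero.1 <|
      ((hA.symm hlam).pow j).map_of_commute ((hAS.symm.pow_pow j k).smul_right _)

/-- Key computation of Lemma 6.2: if T is invertible, λ ≠ 0, x_n → 0 weakly with norms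
bounded below and ‖(T − λ)x_n‖ → 0, then y_n = λ^k T^k x_n has norms bounded below,
converges weakly to 0, and ‖(T^j − λ^j)y_n‖ → 0 and ‖(T^{−j} − λ^{−j})y_n‖ → 0 for
j = 1,…,k. -/
theorem stmt8 {H : Type*} [NormedAddCommGroup H] [InnerProductSpace ℂ H] [CompleteSpace H]
    (T : H ≃L[ℂ] H) (lam : ℂ) (hlam : lam ≠ 0) (k : ℕ) (hk : 1 ≤ k)
    (x : ℕ → H)
    (hweak : ∀ w : H, Filter.Tendsto (fun n => (inner ℂ w (x n) : ℂ)) Filter.atTop (nhds 0))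
    (hinf : ∃ c > (0 : ℝ), ∀ n, c ≤ ‖x n‖)
    (hconv : Filter.Tendsto (fun n => ‖(T : H →L[ℂ] H) (x n) - lam • x n‖)
      Filter.atTop (nhds 0))
    (y : ℕ → H) (hy : y = fun n => lam ^ k • (((T : H →L[ℂ] H) ^ k) (x n))) :
    (∃ c > (0 : ℝ), ∀ n, c ≤ ‖y n‖) ∧
    (∀ w : H, Filter.Tendsto (fun n => (inner ℂ w (y n) : ℂ)) Filter.atTop (nhds 0)) ∧
    (∀ j : ℕ, 1 ≤ j → j ≤ k →
      Filter.Tendsto (fun n => ‖((T : H →L[ℂ] H) ^ j) (y n) - lam ^ j • y n‖)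
        Filter.atTop (nhds 0)) ∧
    (∀ j : ℕ, 1 ≤ j → j ≤ k →
      Filter.Tendsto (fun n => ‖((T.symm : H →L[ℂ] H) ^ j) (y n) - (lam⁻¹) ^ j • y n‖)
        Filter.atTop (nhds 0)) :=
  stmt8_general T lam hlam k x hweak hinf hconv y hy
end

section
/- Let H be a Hilbert space, (u_j) a finite orthonormal family, M_{n−1} = span{u₁,…,u_{n−1}} and M_n = span{u₁,…,u_n}. Let y ∈ H and suppose u_n = √(1−η)·v + √η·b where 0 < η < 1, v ⊥ b, ‖v‖ = ‖b‖ = 1, v ⊥ y, and b = (I − P_{M_{n−1}})y / ‖(I − P_{M_{n−1}})y‖ (assuming y ∉ M_{n−1}). Prove that dist²(y, M_n) = (1 − η)·dist²(y, M_{n−1}). -/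
/-!
Let `p` be the nearest point of `M_{n-1}` to `y`. Since `u_n ⊥ M_{n-1}`, the nearest point of
`M_n = M_{n-1} ⊔ ℂ u_n` is `p + ⟪u_n, y⟫ u_n`, so by Pythagoras
`dist²(y, M_n) = dist²(y, M_{n-1}) - |⟪u_n, y⟫|²`. As `v ⊥ y` and `b` is the unit vector along
`y - p ⊥ p`, one gets `⟪u_n, y⟫ = √η ⟪b, y⟫ = √η ‖y - p‖`.
-/

open Submodule Metric

section

variable {𝕜 E : Type*} [RCLike 𝕜] [NormedAddCommGroup E] [InnerProductSpace 𝕜 E]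

theorem Submodule.infDist_eq_norm_sub_of_sub_mem_orthogonal {K : Submodule 𝕜 E} {y p : E}
    (hp : p ∈ K) (hyp : y - p ∈ Kᗮ) : infDist y (K : Set E) = ‖y - p‖ := by
  rw [infDist_eq_iInf,
    (norm_eq_iInf_iff_inner_eq_zero K hp).2 fun x hx => inner_eq_zero_symm.1 (hyp x hx)]
  simp_rw [dist_eq_norm]
  rfl

/-- The nearest point of `K ⊔ 𝕜 ∙ e` to `y` is `p + ⟪e, y⟫ • e`. -/
theorem Submodule.infDist_sup_span_singleton_sq {K : Submodule 𝕜 E} {y p e : E} (hp : p ∈ K)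
    (hyp : y - p ∈ Kᗮ) (he : ‖e‖ = 1) (heK : e ∈ Kᗮ) :
    infDist y ((K ⊔ 𝕜 ∙ e : Submodule 𝕜 E) : Set E) ^ 2
      = infDist y (K : Set E) ^ 2 - ‖inner 𝕜 e y‖ ^ 2 := by
  set c := inner 𝕜 e y
  have hq : p + c • e ∈ K ⊔ 𝕜 ∙ e := add_mem_sup hp (mem_span_singleton.2 ⟨c, rfl⟩)
  have hep : inner 𝕜 e p = 0 := inner_eq_zero_symm.1 (heK p hp)
  have hperp_e : y - (p + c • e) ∈ (𝕜 ∙ e)ᗮ := by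
    rw [mem_orthogonal_singleton_iff_inner_right, sub_add_eq_sub_sub, inner_sub_right,
      inner_sub_right, inner_smul_right, inner_self_eq_norm_sq_to_K, he, hep]
    simp [c]
  have hperp : y - (p + c • e) ∈ (K ⊔ 𝕜 ∙ e)ᗮ := by
    refine inf_orthogonal K _ ▸ ⟨?_, hperp_e⟩
    rw [sub_add_eq_sub_sub]
    exact sub_mem hyp (smul_mem _ _ heK)
  have hpyth : ‖y - p‖ ^ 2 = ‖y - (p + c • e)‖ ^ 2 + ‖c‖ ^ 2 := by
    have h := norm_add_sq_eq_norm_sq_add_norm_sq_of_inner_eq_zero (y - (p + c • e)) (c • e)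
      (by rw [inner_smul_right,
        inner_eq_zero_symm.1 (mem_orthogonal_singleton_iff_inner_right.1 hperp_e), mul_zero])
    rw [sub_add_eq_sub_sub, sub_add_cancel, norm_smul, he, mul_one] at h
    rw [sub_add_eq_sub_sub, sq, sq, sq, h]
  rw [infDist_eq_norm_sub_of_sub_mem_orthogonal hq hperp,
    infDist_eq_norm_sub_of_sub_mem_orthogonal hp hyp, hpyth]
  ring

theorem Submodule.span_range_eq_span_range_castSucc_sup {n : ℕ} (u : Fin (n + 1) → E) :
    span 𝕜 (Set.range u)
      = span 𝕜 (Set.range fun i : Fin n => u i.castSucc) ⊔ 𝕜 ∙ u (Fin.last n) := by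
  conv_lhs => rw [← Fin.snoc_init_self u, Fin.range_snoc, span_insert, sup_comm]
  rfl

theorem Orthonormal.last_mem_orthogonal_span_castSucc {n : ℕ} {u : Fin (n + 1) → E}
    (hu : Orthonormal 𝕜 u) :
    u (Fin.last n) ∈ (span 𝕜 (Set.range fun i : Fin n => u i.castSucc))ᗮ := by
  have hle : span 𝕜 (Set.range fun i : Fin n => u i.castSucc) ≤ (𝕜 ∙ u (Fin.last n))ᗮ :=
    span_le.2 <| by
      rintro _ ⟨i, rfl⟩
      exact mem_orthogonal_singleton_iff_inner_left.2
        (hu.inner_eq_zero (Fin.castSucc_lt_last i).ne)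
  exact fun x hx => mem_orthogonal_singleton_iff_inner_left.1 (hle hx)

theorem inner_inv_norm_smul_sub_self_eq_norm {y p : E} (h : inner 𝕜 (y - p) p = 0) :
    inner 𝕜 ((‖y - p‖⁻¹ : 𝕜) • (y - p)) y = ‖y - p‖ := by
  obtain ⟨x, rfl⟩ : ∃ x, y = x + p := ⟨y - p, (sub_add_cancel y p).symm⟩
  rw [add_sub_cancel_right] at h ⊢
  rw [inner_add_right, inner_smul_left, inner_smul_left, h, mul_zero, add_zero,
    inner_self_eq_norm_sq_to_K, map_inv₀, RCLike.conj_ofReal, sq, ← mul_assoc, inv_mul_mul_self]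

end

theorem stmt12_general {H : Type*} [NormedAddCommGroup H] [InnerProductSpace ℂ H]
    (n : ℕ) (u : Fin (n + 1) → H) (hON : Orthonormal ℂ u)
    (M' : Submodule ℂ H)
    (hM' : M' = Submodule.span ℂ (Set.range fun i : Fin n => u i.castSucc))
    (Mn : Submodule ℂ H) (hMn : Mn = Submodule.span ℂ (Set.range u))
    (y v b p : H) (η : ℝ) (hη : 0 < η)
    (hp : p ∈ M') (hyp : ∀ x ∈ M', (inner ℂ x (y - p) : ℂ) = 0)
    (hb : b = ‖y - p‖⁻¹ • (y - p))
    (hvy : (inner ℂ v y : ℂ) = 0)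
    (hu : u (Fin.last n) = (Real.sqrt (1 - η)) • v + (Real.sqrt η) • b) :
    Metric.infDist y (Mn : Set H) ^ 2 = (1 - η) * Metric.infDist y (M' : Set H) ^ 2 := by
  have hperp : y - p ∈ M'ᗮ := hyp
  have hby : inner ℂ b y = ‖y - p‖ := by
    rw [hb, RCLike.real_smul_eq_coe_smul (K := ℂ), RCLike.ofReal_inv]
    exact inner_inv_norm_smul_sub_self_eq_norm (inner_eq_zero_symm.1 (hperp p hp))
  have huy : inner ℂ (u (Fin.last n)) y = (√η * ‖y - p‖ : ℝ) := by
    rw [hu, RCLike.real_smul_eq_coe_smul (K := ℂ), RCLike.real_smul_eq_coe_smul (K := ℂ),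
      inner_add_left, inner_smul_left, inner_smul_left, hvy, hby]
    simp
  have hlast : u (Fin.last n) ∈ M'ᗮ := hM' ▸ hON.last_mem_orthogonal_span_castSucc
  rw [hMn, span_range_eq_span_range_castSucc_sup, ← hM',
    infDist_sup_span_singleton_sq hp hperp (hON.1 _) hlast, huy,
    infDist_eq_norm_sub_of_sub_mem_orthogonal hp hperp, Complex.norm_real, Real.norm_eq_abs,
    sq_abs, mul_pow, Real.sq_sqrt hη.le]
  ring

/-- The distance-decrease computation: if u_n = √(1−η) v + √η b with b the normalized
projection of y onto the orthocomplement of M_{n−1}, then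
dist²(y, M_n) = (1 − η) dist²(y, M_{n−1}). -/
theorem stmt12 {H : Type*} [NormedAddCommGroup H] [InnerProductSpace ℂ H] [CompleteSpace H]
    (n : ℕ) (u : Fin (n + 1) → H) (hON : Orthonormal ℂ u)
    (M' : Submodule ℂ H)
    (hM' : M' = Submodule.span ℂ (Set.range fun i : Fin n => u i.castSucc))
    (Mn : Submodule ℂ H) (hMn : Mn = Submodule.span ℂ (Set.range u))
    (y v b p : H) (η : ℝ) (hη : 0 < η) (hη1 : η < 1)
    (hp : p ∈ M') (hyp : ∀ x ∈ M', (inner ℂ x (y - p) : ℂ) = 0) (hynotin : y ∉ M')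
    (hb : b = ‖y - p‖⁻¹ • (y - p))
    (hv : ‖v‖ = 1) (hvb : (inner ℂ v b : ℂ) = 0) (hvy : (inner ℂ v y : ℂ) = 0)
    (hvM : ∀ x ∈ M', (inner ℂ v x : ℂ) = 0)
    (hu : u (Fin.last n) = (Real.sqrt (1 - η)) • v + (Real.sqrt η) • b) :
    Metric.infDist y (Mn : Set H) ^ 2 = (1 - η) * Metric.infDist y (M' : Set H) ^ 2 :=
  stmt12_general n u hON M' hM' Mn hMn y v b p η hη hp hyp hb hvy hu
end

section
/- Let H be a Hilbert space, T ∈ B(H), M a finite-codimensional subspace, and suppose x, y ∈ M ∩ T⁻¹M are unit vectors with y ⊥ x, y ⊥ Tx, y ⊥ T*x, |⟨Tx,x⟩ − λ| < ε, |⟨Ty,y⟩ − μ| < ε. Let v = (x+y)/√2 and w = Tv − ⟨Tv,v⟩v. Prove that ‖w‖ ≥ (|λ − μ|/2 − 2ε)/√2. -/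
/-!
It suffices to test `w` against the unit vector `x`, since `‖w‖ ≥ |⟨x, w⟩|`. The orthogonality
relations kill every cross term, so `⟨v, Tv⟩ = (⟨x, Tx⟩ + ⟨y, Ty⟩) / 2` and
`⟨x, w⟩ = (⟨x, Tx⟩ - ⟨y, Ty⟩) / (2√2)`; the triangle inequality then replaces
`⟨x, Tx⟩, ⟨y, Ty⟩` by `λ, μ` at a cost of `2ε`.
-/

section

variable {𝕜 E : Type*} [RCLike 𝕜] [NormedAddCommGroup E] [InnerProductSpace 𝕜 E]
  (T : E →ₗ[𝕜] E) {x y : E}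

theorem inner_add_map_add_of_cross_eq_zero (hxTy : inner 𝕜 x (T y) = 0)
    (hyTx : inner 𝕜 y (T x) = 0) :
    inner 𝕜 (x + y) (T (x + y)) = inner 𝕜 x (T x) + inner 𝕜 y (T y) := by
  simp only [map_add, inner_add_left, inner_add_right, hxTy, hyTx]
  ring

theorem inner_map_sub_inner_smul_of_cross_eq_zero (hx : ‖x‖ = 1) (hxy : inner 𝕜 x y = 0)
    (hxTy : inner 𝕜 x (T y) = 0) (hyTx : inner 𝕜 y (T x) = 0) (r : ℝ) {v : E}
    (hv : v = (r : 𝕜) • (x + y)) :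
    inner 𝕜 x (T v - inner 𝕜 v (T v) • v) =
      r * (inner 𝕜 x (T x) - r ^ 2 * (inner 𝕜 x (T x) + inner 𝕜 y (T y))) := by
  have hxx : inner 𝕜 x (x + y) = 1 := by
    rw [inner_add_right, inner_self_eq_one_of_norm_eq_one hx, hxy, add_zero]
  have hxTxy : inner 𝕜 x (T (x + y)) = inner 𝕜 x (T x) := by
    rw [map_add, inner_add_right, hxTy, add_zero]
  simp only [hv, map_smul, inner_sub_right, inner_smul_right, inner_smul_left, RCLike.conj_ofReal,
    inner_add_map_add_of_cross_eq_zero T hxTy hyTx, hxx, hxTxy]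
  ring

theorem norm_inner_map_sub_inner_smul_of_cross_eq_zero (hx : ‖x‖ = 1) (hxy : inner 𝕜 x y = 0)
    (hxTy : inner 𝕜 x (T y) = 0) (hyTx : inner 𝕜 y (T x) = 0) {v : E}
    (hv : v = (((Real.sqrt 2)⁻¹ : ℝ) : 𝕜) • (x + y)) :
    ‖inner 𝕜 x (T v - inner 𝕜 v (T v) • v)‖ =
      ‖inner 𝕜 x (T x) - inner 𝕜 y (T y)‖ / (2 * Real.sqrt 2) := by
  have hsq : ((Real.sqrt 2)⁻¹ : ℝ) ^ 2 = 2⁻¹ := by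
    rw [inv_pow, Real.sq_sqrt zero_le_two]
  rw [inner_map_sub_inner_smul_of_cross_eq_zero T hx hxy hxTy hyTx _ hv, ← RCLike.ofReal_pow, hsq]
  have hs : (0 : ℝ) < Real.sqrt 2 := by positivity
  rw [show inner 𝕜 x (T x) - ((2⁻¹ : ℝ) : 𝕜) * (inner 𝕜 x (T x) + inner 𝕜 y (T y)) =
      (inner 𝕜 x (T x) - inner 𝕜 y (T y)) / 2 by push_cast; ring,
    norm_mul, norm_div, RCLike.norm_ofReal, RCLike.norm_two, abs_of_pos (inv_pos.2 hs)]
  field_simp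

end

theorem stmt16_general {H : Type*} [NormedAddCommGroup H] [InnerProductSpace ℂ H] [CompleteSpace H]
    (T : H →L[ℂ] H) (lam mu : ℂ) (ε : ℝ) (x y : H) (hx : ‖x‖ = 1)
    (hxy : (inner ℂ x y : ℂ) = 0) (hTxy : (inner ℂ (T x) y : ℂ) = 0)
    (hTsxy : (inner ℂ ((ContinuousLinearMap.adjoint T) x) y : ℂ) = 0)
    (hl : ‖(inner ℂ x (T x) : ℂ) - lam‖ < ε)
    (hm : ‖(inner ℂ y (T y) : ℂ) - mu‖ < ε)
    (v w : H) (hv : v = (Real.sqrt 2)⁻¹ • (x + y))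
    (hw : w = T v - (inner ℂ v (T v) : ℂ) • v) :
    (‖lam - mu‖ / 2 - 2 * ε) / Real.sqrt 2 ≤ ‖w‖ := by
  set a := inner ℂ x (T x)
  set b := inner ℂ y (T y)
  have hxTy : inner ℂ x (T y) = 0 := by rwa [ContinuousLinearMap.adjoint_inner_left] at hTsxy
  have hyTx : inner ℂ y (T x) = 0 := inner_eq_zero_symm.1 hTxy
  have hxw : ‖inner ℂ x w‖ = ‖a - b‖ / (2 * Real.sqrt 2) := by
    rw [hw]
    exact norm_inner_map_sub_inner_smul_of_cross_eq_zero (T : H →ₗ[ℂ] H) hx hxy hxTy hyTx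
      (by rw [hv, RCLike.real_smul_eq_coe_smul (K := ℂ)])
  have hlam_mu : ‖lam - mu‖ ≤ ‖a - b‖ + 2 * ε := by
    rw [norm_sub_rev] at hl
    linarith [norm_sub_le_norm_sub_add_norm_sub lam a mu, norm_sub_le_norm_sub_add_norm_sub a b mu]
  calc (‖lam - mu‖ / 2 - 2 * ε) / Real.sqrt 2
    _ ≤ ‖a - b‖ / 2 / Real.sqrt 2 := by gcongr; linarith [(norm_nonneg _).trans_lt hm]
    _ = ‖inner ℂ x w‖ := by rw [hxw, div_div]
    _ ≤ ‖w‖ := by simpa [hx] using norm_inner_le_norm (𝕜 := ℂ) x w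

/-- The core estimate in Lemma 4.1: with v = (x+y)/√2 and w = Tv − ⟨Tv,v⟩v one has
‖w‖ ≥ (|λ − μ|/2 − 2ε)/√2. -/
theorem stmt16 {H : Type*} [NormedAddCommGroup H] [InnerProductSpace ℂ H] [CompleteSpace H]
    (T : H →L[ℂ] H) (M : Submodule ℂ H) (lam mu : ℂ) (ε : ℝ) (hε : 0 < ε)
    (x y : H) (hxM : x ∈ M) (hyM : y ∈ M) (hTx : T x ∈ M) (hTy : T y ∈ M)
    (hx : ‖x‖ = 1) (hy : ‖y‖ = 1)
    (hxy : (inner ℂ x y : ℂ) = 0) (hTxy : (inner ℂ (T x) y : ℂ) = 0)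
    (hTsxy : (inner ℂ ((ContinuousLinearMap.adjoint T) x) y : ℂ) = 0)
    (hl : ‖(inner ℂ x (T x) : ℂ) - lam‖ < ε)
    (hm : ‖(inner ℂ y (T y) : ℂ) - mu‖ < ε)
    (v w : H) (hv : v = (Real.sqrt 2)⁻¹ • (x + y))
    (hw : w = T v - (inner ℂ v (T v) : ℂ) • v) :
    (‖lam - mu‖ / 2 - 2 * ε) / Real.sqrt 2 ≤ ‖w‖ :=
  stmt16_general T lam mu ε x y hx hxy hTxy hTsxy hl hm v w hv hw
end
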